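/- Consider the time-delay switched linear system ẋ(t) = A⁰_{σ(t)} x(t) + ∫_{[−h,0]} d[ν_{σ(t)}(θ)] x(t+θ), t ≥ 0, σ ∈ Σ₊, with N constituent subsystems (A⁰_k, ν_k), k = 1,…,N. If there exists a vector ξ ∈ ℝⁿ with ξ ≫ 0 such that (M(A⁰_k) + V(ν_k)) ξ ≪ 0 for every k = 1,…,N, then the switched system is exponentially stable under arbitrary switching: there exist M > 0 and α > 0 such that for every initial function φ ∈ C([−h,0],ℝⁿ), every switching signal σ ∈ Σ₊, and every corresponding solution x, one has ‖x(t)‖ ≤ M e^{−αt} ‖φ‖ for all t ≥ 0. -/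

import Mathlib

open MeasureTheory Set Filter Matrix
open scoped ENNReal

noncomputable section

/-- Integral of a real function against a finite signed Borel measure. -/
def sint {α : Type*} [MeasurableSpace α] (s : MeasureTheory.SignedMeasure α) (f : α → ℝ) : ℝ :=
  (∫ a, f a ∂s.toJordanDecomposition.posPart) - ∫ a, f a ∂s.toJordanDecomposition.negPart

/-- Total variation of a finite signed measure, evaluated on the whole space. -/
def tvar {α : Type*} [MeasurableSpace α] (s : MeasureTheory.SignedMeasure α) : ℝ :=
  (s.totalVariation Set.univ).toReal

/-- Row-sum matrix norm (the operator norm induced by the `∞`-norm). -/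
def matNorm {p q : ℕ} (A : Matrix (Fin p) (Fin q) ℝ) : ℝ :=
  ⨆ i, ∑ j, |A i j|

/-- The Metzler matrix `M(A)` associated with `A`. -/
def metz {n : ℕ} (A : Matrix (Fin n) (Fin n) ℝ) : Matrix (Fin n) (Fin n) ℝ :=
  Matrix.of fun i j => if i = j then A i j else |A i j|

/-- The matrix `V(ν)` of total variations of a matrix of signed measures. -/
def Vmat {h : ℝ} {p q : ℕ}
    (ν : Fin p → Fin q → MeasureTheory.SignedMeasure (Set.Icc (-h) (0:ℝ))) :
    Matrix (Fin p) (Fin q) ℝ :=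
  Matrix.of fun i j => tvar (ν i j)

/-- The norm `‖ν‖ = max_i Σ_j |ν_{ij}|([-h,0])` of a matrix of signed measures. -/
def mnorm {h : ℝ} {p q : ℕ}
    (ν : Fin p → Fin q → MeasureTheory.SignedMeasure (Set.Icc (-h) (0:ℝ))) : ℝ :=
  ⨆ i, ∑ j, tvar (ν i j)

/-- A switching signal: piecewise constant, right continuous, with strictly
positive dwell time (and normalized to be constant on `(-∞, 0]`). -/
def IsSwitchingSignal {N : ℕ} (σ : ℝ → Fin N) : Prop :=
  (∀ t ≤ (0:ℝ), σ t = σ 0) ∧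
  ∃ d : ℝ, 0 < d ∧ ∃ τ : ℕ → ℝ, τ 0 = 0 ∧ (∀ k, τ k + d ≤ τ (k + 1)) ∧
    ∀ k : ℕ, ∀ t ∈ Set.Ico (τ k) (τ (k + 1)), σ t = σ (τ k)

/-- `x` is a solution of the switched delay system `ẋ(t) = A⁰_{σ(t)} x(t) +
∫_{[-h,0]} d[ν_{σ(t)}(θ)] x(t+θ)` with switching signal `σ` and initial function `φ`. -/
def IsSolution (h : ℝ) {N n : ℕ} (σ : ℝ → Fin N)
    (A : Fin N → Matrix (Fin n) (Fin n) ℝ)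
    (ν : Fin N → Fin n → Fin n → MeasureTheory.SignedMeasure (Set.Icc (-h) (0:ℝ)))
    (φ : C(Set.Icc (-h) (0:ℝ), Fin n → ℝ)) (x : ℝ → Fin n → ℝ) : Prop :=
  ContinuousOn x (Set.Ici (-h)) ∧
  (∀ θ : Set.Icc (-h) (0:ℝ), x (θ : ℝ) = φ θ) ∧
  ∀ t : ℝ, 0 ≤ t → (∀ᶠ s in nhds t, σ s = σ t) → ∀ i,
    HasDerivWithinAt (fun s => x s i)
      ((∑ j, A (σ t) i j * x t j) +
        ∑ j, sint (ν (σ t) i j) fun θ => x (t + (θ : ℝ)) j)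
      (Set.Ici t) t

/-- Exponential stability of the switched system under arbitrary switching. -/
def ExpStableSw (h : ℝ) {N n : ℕ}
    (A : Fin N → Matrix (Fin n) (Fin n) ℝ)
    (ν : Fin N → Fin n → Fin n → MeasureTheory.SignedMeasure (Set.Icc (-h) (0:ℝ))) : Prop :=
  ∃ M > (0:ℝ), ∃ α > (0:ℝ), ∀ σ : ℝ → Fin N, IsSwitchingSignal σ →
    ∀ φ x, IsSolution h σ A ν φ x →
      ∀ t ≥ (0:ℝ), ‖x t‖ ≤ M * Real.exp (-α * t) * ‖φ‖

/-- `x` is a solution of the (non-switched) delay system `(A, ν)` with initial function `φ`. -/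
def IsSolution1 (h : ℝ) {n : ℕ} (A : Matrix (Fin n) (Fin n) ℝ)
    (ν : Fin n → Fin n → MeasureTheory.SignedMeasure (Set.Icc (-h) (0:ℝ)))
    (φ : C(Set.Icc (-h) (0:ℝ), Fin n → ℝ)) (x : ℝ → Fin n → ℝ) : Prop :=
  ContinuousOn x (Set.Ici (-h)) ∧
  (∀ θ : Set.Icc (-h) (0:ℝ), x (θ : ℝ) = φ θ) ∧
  ∀ t : ℝ, 0 ≤ t → ∀ i,
    HasDerivWithinAt (fun s => x s i)
      ((∑ j, A i j * x t j) + ∑ j, sint (ν i j) fun θ => x (t + (θ : ℝ)) j)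
      (Set.Ici t) t

/-- Exponential stability of a single (non-switched) delay system. -/
def ExpStable1 (h : ℝ) {n : ℕ} (A : Matrix (Fin n) (Fin n) ℝ)
    (ν : Fin n → Fin n → MeasureTheory.SignedMeasure (Set.Icc (-h) (0:ℝ))) : Prop :=
  ∃ M > (0:ℝ), ∃ α > (0:ℝ), ∀ φ x, IsSolution1 h A ν φ x →
    ∀ t ≥ (0:ℝ), ‖x t‖ ≤ M * Real.exp (-α * t) * ‖φ‖

/-!
Fix weights `ξ ≫ 0` and a rate `α > 0` so small that `(α I + M(A⁰_k) + e^{αh} V(ν_k)) ξ ≪ 0`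
for every mode `k`. Every solution then obeys `|x_j(t)| ≤ K e^{-αt} ξ_j` whenever
`‖φ‖ < K min ξ`, by continuous induction on `t`: on a short interval after any time `T`
only the mode `σ(T)` acts; the whole past still obeys the bound, so the delay term is at most
`e^{αh} V(ν_k)` applied to the bound, and at a coordinate touching its bound the Metzler
structure pushes its right derivative strictly below that of `K e^{-αt} ξ_j`.
Letting `K ↓ ‖φ‖ / min ξ` gives `‖x(t)‖ ≤ (max ξ / min ξ) e^{-αt} ‖φ‖`.
-/

open Topology

lemma tvar_eq_posPart_add_negPart {α : Type*} [MeasurableSpace α] (s : SignedMeasure α) :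
    tvar s = s.toJordanDecomposition.posPart.real univ
      + s.toJordanDecomposition.negPart.real univ := by
  simp only [tvar, SignedMeasure.totalVariation, Measure.add_apply, measureReal_def]
  exact ENNReal.toReal_add (measure_ne_top _ _) (measure_ne_top _ _)

lemma abs_sint_le {α : Type*} [MeasurableSpace α] (s : SignedMeasure α) {f : α → ℝ} {C : ℝ}
    (hf : ∀ a, |f a| ≤ C) : |sint s f| ≤ tvar s * C := by
  have hbound (μ : Measure α) [IsFiniteMeasure μ] : |∫ a, f a ∂μ| ≤ C * μ.real univ :=
    (Real.norm_eq_abs _).symm.trans_le <| norm_integral_le_of_norm_le_const <|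
      .of_forall fun a => (Real.norm_eq_abs _).trans_le (hf a)
  rw [tvar_eq_posPart_add_negPart]
  calc |sint s f| ≤ |∫ a, f a ∂s.toJordanDecomposition.posPart|
        + |∫ a, f a ∂s.toJordanDecomposition.negPart| := abs_sub _ _
    _ ≤ _ := by linarith [hbound s.toJordanDecomposition.posPart,
                hbound s.toJordanDecomposition.negPart]

lemma sint_neg {α : Type*} [MeasurableSpace α] (s : SignedMeasure α) (f : α → ℝ) :
    sint s (fun a => -f a) = -sint s f := by
  simp only [sint, integral_neg]
  ring

lemma sum_mul_le_metz_mulVec {n : ℕ} (A : Matrix (Fin n) (Fin n) ℝ) (i : Fin n)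
    {b y : Fin n → ℝ} {c : ℝ} (hy : ∀ j, |y j| ≤ b j + c) (hyi : b i - c ≤ y i) :
    ∑ j, A i j * y j ≤ (metz A *ᵥ b) i + c * ∑ j, |A i j| := by
  simp only [mulVec, dotProduct, Finset.mul_sum, ← Finset.sum_add_distrib]
  refine Finset.sum_le_sum fun j _ => ?_
  by_cases hij : i = j
  · subst hij
    have hdev : |y i - b i| ≤ c :=
      abs_sub_le_iff.2 ⟨by linarith [le_abs_self (y i), hy i], by linarith⟩
    have hdiag : A i i * (y i - b i) ≤ |A i i| * c :=
      (le_abs_self _).trans ((abs_mul _ _).trans_le (by gcongr))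
    simp only [metz, of_apply, if_true]
    linarith
  · have hoff : A i j * y j ≤ |A i j| * (b j + c) :=
      (le_abs_self _).trans ((abs_mul _ _).trans_le (by gcongr; exact hy j))
    simp only [metz, of_apply, hij, if_false]
    linarith

lemma sum_sint_le_Vmat_mulVec {h : ℝ} {n : ℕ}
    (ν : Fin n → Fin n → SignedMeasure (Icc (-h) (0:ℝ))) (i : Fin n) {b : Fin n → ℝ}
    {ψ : Fin n → Icc (-h) (0:ℝ) → ℝ} {c E : ℝ} (hψ : ∀ j θ, |ψ j θ| ≤ E * b j + c) :
    ∑ j, sint (ν i j) (ψ j) ≤ E * (Vmat ν *ᵥ b) i + c * ∑ j, tvar (ν i j) := by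
  simp only [mulVec, dotProduct, Vmat, of_apply, Finset.mul_sum, ← Finset.sum_add_distrib]
  refine Finset.sum_le_sum fun j _ => ?_
  have := (le_abs_self _).trans (abs_sint_le (ν i j) (hψ j))
  linarith

lemma exists_pos_forall_lt_zero {ι : Type*} [Finite ι] {f : ι → ℝ → ℝ}
    (hf : ∀ p, ContinuousAt (f p) 0) (h0 : ∀ p, f p 0 < 0) : ∃ a > 0, ∀ p, f p a < 0 := by
  have hev : ∀ᶠ a in 𝓝[>] 0, ∀ p, f p a < 0 :=
    (eventually_all.2 fun p => (hf p).eventually (eventually_lt_nhds (h0 p))).filter_mono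
      nhdsWithin_le_nhds
  obtain ⟨a, ha, ha0⟩ := (hev.and self_mem_nhdsWithin).exists
  exact ⟨a, ha0, ha⟩

lemma exists_pos_forall_le_and_le {ι : Type*} [Finite ι] {ξ : ι → ℝ} (hξ : ∀ i, 0 < ξ i) :
    ∃ m > 0, ∃ M > 0, ∀ i, m ≤ ξ i ∧ ξ i ≤ M := by
  rcases isEmpty_or_nonempty ι with hι | hι
  · exact ⟨1, one_pos, 1, one_pos, isEmptyElim⟩
  obtain ⟨i₀, hi₀⟩ := Finite.exists_min ξ
  obtain ⟨i₁, hi₁⟩ := Finite.exists_max ξ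
  exact ⟨ξ i₀, hξ i₀, ξ i₁, hξ i₁, fun i => ⟨hi₀ i, hi₁ i⟩⟩

lemma le_add_mul_sub_of_hasDerivWithinAt_Ici {f f' : ℝ → ℝ} {a b C : ℝ} (hab : a < b)
    (hf : ContinuousOn f (Icc a b)) (hf' : ∀ s ∈ Ioo a b, HasDerivWithinAt f (f' s) (Ici s) s)
    (hC : ∀ s ∈ Ioo a b, f' s ≤ C) : f b ≤ f a + C * (b - a) := by
  have hfrom : ∀ w ∈ Ioo a b, f b ≤ f w + C * (b - w) := by
    intro w hw
    have hline (s : ℝ) : HasDerivWithinAt (fun s => f w + C * (s - w)) C (Ici s) s := by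
      simpa using (((hasDerivAt_id s).sub_const w).const_mul C).const_add (f w) |>.hasDerivWithinAt
    refine image_le_of_deriv_right_le_deriv_boundary (hf.mono (Icc_subset_Icc_left hw.1.le))
      (fun s hs => hf' s ⟨hw.1.trans_le hs.1, hs.2⟩) (by simp) (by fun_prop)
      (fun s _ => hline s) (fun s hs => hC s ⟨hw.1.trans_le hs.1, hs.2⟩) ⟨hw.2.le, le_rfl⟩
  have hlim : Tendsto (fun w => f w + C * (b - w)) (𝓝[>] a) (𝓝 (f a + C * (b - a))) :=
    ((hf a ⟨le_rfl, hab.le⟩).mono_of_mem_nhdsWithin (Icc_mem_nhdsGT hab)).tendsto.add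
      ((Continuous.tendsto (by fun_prop) a).mono_left nhdsWithin_le_nhds)
  exact ge_of_tendsto hlim (eventually_of_mem (Ioo_mem_nhdsGT hab) hfrom)

lemma le_mul_exp_of_hasDerivWithinAt_Ici {f f' : ℝ → ℝ} {a b α : ℝ} (hab : a < b)
    (hfa : 0 ≤ f a) (hf : ContinuousOn f (Icc a b))
    (hf' : ∀ s ∈ Ioo a b, HasDerivWithinAt f (f' s) (Ici s) s)
    (hC : ∀ s ∈ Ioo a b, f' s ≤ -α * f a) : f b ≤ f a * Real.exp (-α * (b - a)) := by
  have hlin := le_add_mul_sub_of_hasDerivWithinAt_Ici hab hf hf' hC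
  have hexp : 1 - α * (b - a) ≤ Real.exp (-α * (b - a)) := by
    linarith [Real.add_one_le_exp (-α * (b - a))]
  calc f b ≤ f a * (1 - α * (b - a)) := by linarith
    _ ≤ f a * Real.exp (-α * (b - a)) := mul_le_mul_of_nonneg_left hexp hfa

def IsDecayRate (h : ℝ) {N n : ℕ} (A : Fin N → Matrix (Fin n) (Fin n) ℝ)
    (ν : Fin N → Fin n → Fin n → SignedMeasure (Icc (-h) (0:ℝ))) (ξ : Fin n → ℝ) (α : ℝ) :
    Prop :=
  ∀ k i, α * ξ i + (metz (A k) *ᵥ ξ) i + Real.exp (α * h) * (Vmat (ν k) *ᵥ ξ) i < 0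

lemma exists_isDecayRate {h : ℝ} {N n : ℕ} {A : Fin N → Matrix (Fin n) (Fin n) ℝ}
    {ν : Fin N → Fin n → Fin n → SignedMeasure (Icc (-h) (0:ℝ))} {ξ : Fin n → ℝ}
    (hξ : ∀ k i, ((metz (A k) + Vmat (ν k)) *ᵥ ξ) i < 0) : ∃ α > 0, IsDecayRate h A ν ξ α :=
  exists_pos_forall_lt_zero (f := fun (p : Fin N × Fin n) α => α * ξ p.2
      + (metz (A p.1) *ᵥ ξ) p.2 + Real.exp (α * h) * (Vmat (ν p.1) *ᵥ ξ) p.2)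
    (fun _ => by fun_prop) (fun p => by simpa [add_mulVec] using hξ p.1 p.2) |>.imp
    fun _ ⟨hα, hf⟩ => ⟨hα, fun k i => hf (k, i)⟩

lemma IsSwitchingSignal.exists_Ico_eq {N : ℕ} {σ : ℝ → Fin N} (hσ : IsSwitchingSignal σ)
    {T : ℝ} (hT : 0 ≤ T) : ∃ T' > T, ∀ s ∈ Ico T T', σ s = σ T := by
  obtain ⟨-, d, hd, τ, hτ0, hτd, hτσ⟩ := hσ
  have hτ_ge (m : ℕ) : m * d ≤ τ m := by
    induction m with
    | zero => simp [hτ0]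
    | succ m ih => push_cast; linarith [hτd m]
  have hex : ∃ m, T < τ m := by
    obtain ⟨m, hm⟩ := exists_nat_gt (T / d)
    exact ⟨m, by linarith [(div_lt_iff₀ hd).1 hm, hτ_ge m]⟩
  obtain ⟨p, hp⟩ : ∃ p, Nat.find hex = p + 1 :=
    Nat.exists_eq_succ_of_ne_zero fun h0 => by
      have := Nat.find_spec hex
      rw [h0, hτ0] at this
      linarith
  have hpT : τ p ≤ T := not_lt.1 (Nat.find_min hex (by omega))
  have hTp : T < τ (p + 1) := hp ▸ Nat.find_spec hex
  exact ⟨τ (p + 1), hTp, fun s hs => by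
    rw [hτσ p s ⟨hpT.trans hs.1, hs.2⟩, hτσ p T ⟨hpT, hTp⟩]⟩

section Solution

open Real

variable {h : ℝ} {N n : ℕ} {A : Fin N → Matrix (Fin n) (Fin n) ℝ}
  {ν : Fin N → Fin n → Fin n → SignedMeasure (Icc (-h) (0:ℝ))} {σ : ℝ → Fin N}
  {φ : C(Icc (-h) (0:ℝ), Fin n → ℝ)} {x : ℝ → Fin n → ℝ} {ξ : Fin n → ℝ} {α K T T' c : ℝ}

lemma IsSolution.neg (hx : IsSolution h σ A ν φ x) : IsSolution h σ A ν (-φ) (-x) := by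
  obtain ⟨hc, hφ, hd⟩ := hx
  refine ⟨hc.neg, fun θ => by simp [hφ θ], fun t ht hσ i => ?_⟩
  have := (hd t ht hσ i).neg
  simp only [Pi.neg_apply, sint_neg, mul_neg, Finset.sum_neg_distrib, ← neg_add]
  exact this

lemma IsSolution.hasDerivWithinAt_of_Ico (hx : IsSolution h σ A ν φ x) (hT : 0 ≤ T)
    (hσT : ∀ u ∈ Ico T T', σ u = σ T) {s : ℝ} (hs : s ∈ Ioo T T') (i : Fin n) :
    HasDerivWithinAt (fun u => x u i)
      (∑ j, A (σ T) i j * x s j + ∑ j, sint (ν (σ T) i j) fun θ => x (s + θ) j) (Ici s) s := by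
  have hσs : ∀ u ∈ Ioo T T', σ u = σ T := fun u hu => hσT u ⟨hu.1.le, hu.2⟩
  have hloc : ∀ᶠ u in 𝓝 s, σ u = σ s :=
    eventually_of_mem (Ioo_mem_nhds hs.1 hs.2) fun u hu => by rw [hσs u hu, hσs s hs]
  simpa only [hσs s hs] using hx.2.2 s (hT.trans hs.1.le) hloc i

lemma abs_le_of_forall_Icc_of_forall_Ioo (hh : 0 ≤ h) (hα : 0 ≤ α) (hT : 0 ≤ T) (hc : 0 ≤ c)
    (hpast : ∀ r ∈ Icc (-h) T, ∀ j, |x r j| ≤ K * exp (-α * r) * ξ j)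
    (hnear : ∀ r ∈ Ioo T T', ∀ j, |x r j| ≤ K * exp (-α * T) * ξ j + c) (hKξ : ∀ j, 0 ≤ K * ξ j) :
    ∀ r ∈ Ioo (T - h) T', ∀ j, |x r j| ≤ exp (α * h) * (K * exp (-α * T) * ξ j) + c := by
  intro r hr j
  rcases le_or_gt r T with hrT | hTr
  · have hexp : exp (-α * r) ≤ exp (α * h) * exp (-α * T) := by
      rw [← exp_add]
      exact exp_le_exp.2 (by nlinarith [hr.1])
    calc |x r j| ≤ K * exp (-α * r) * ξ j := hpast r ⟨by linarith [hr.1], hrT⟩ j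
      _ = exp (-α * r) * (K * ξ j) := by ring
      _ ≤ exp (α * h) * exp (-α * T) * (K * ξ j) := mul_le_mul_of_nonneg_right hexp (hKξ j)
      _ ≤ exp (α * h) * (K * exp (-α * T) * ξ j) + c := by linarith
  · have hb : 0 ≤ K * exp (-α * T) * ξ j := by
      rw [mul_right_comm]
      exact mul_nonneg (hKξ j) (exp_pos _).le
    have hE := le_mul_of_one_le_left hb (one_le_exp (mul_nonneg hα hh))
    linarith [hnear r ⟨hTr, hr.2⟩ j]

lemma IsSolution.eventually_le_of_eq (hx : IsSolution h σ A ν φ x) (hσ : IsSwitchingSignal σ)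
    (hh : 0 < h) (hα : 0 ≤ α) (hrate : IsDecayRate h A ν ξ α) (hξ : ∀ j, 0 < ξ j) (hK : 0 < K)
    (hT : 0 ≤ T) (hpast : ∀ r ∈ Icc (-h) T, ∀ j, |x r j| ≤ K * exp (-α * r) * ξ j)
    {i : Fin n} (hi : x T i = K * exp (-α * T) * ξ i) :
    ∀ᶠ z in 𝓝[>] T, x z i ≤ K * exp (-α * z) * ξ i := by
  set β := K * exp (-α * T)
  set k := σ T
  have hβ : 0 < β := by positivity
  -- the slack `c` allowed by continuity is paid for by the strict margin in `hrate`
  obtain ⟨c, hc, hcQ⟩ := exists_pos_mul_lt (mul_pos hβ (neg_pos.2 (hrate k i)))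
    (∑ j, |A k i j| + ∑ j, tvar (ν k i j))
  obtain ⟨T₁, hT₁, hσk⟩ := hσ.exists_Ico_eq hT
  obtain ⟨δ, hδ, hcont⟩ := Metric.continuousAt_iff.1
    (hx.1.continuousAt (Ici_mem_nhds (by linarith : -h < T))) c hc
  set T' := min T₁ (T + δ)
  have hdist : ∀ r ∈ Ioo T T', ∀ j, |x r j - x T j| < c := fun r hr j =>
    (dist_le_pi_dist (x r) (x T) j).trans_lt <| hcont <| by
      rw [Real.dist_eq, abs_of_pos (sub_pos.2 hr.1)]
      linarith [min_le_right T₁ (T + δ), hr.2]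
  have hnear : ∀ r ∈ Ioo T T', ∀ j, |x r j| ≤ β * ξ j + c := fun r hr j => by
    linarith [abs_sub_abs_le_abs_sub (x r j) (x T j), hdist r hr j,
      hpast T ⟨by linarith, le_rfl⟩ j]
  have hwindow := abs_le_of_forall_Icc_of_forall_Ioo hh.le hα hT hc.le hpast hnear
    fun j => (mul_pos hK (hξ j)).le
  have hderiv : ∀ s ∈ Ioo T T', HasDerivWithinAt (fun u => x u i)
      (∑ j, A k i j * x s j + ∑ j, sint (ν k i j) fun θ => x (s + θ) j) (Ici s) s :=
    fun s hs => hx.hasDerivWithinAt_of_Ico hT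
      (fun u hu => hσk u ⟨hu.1, hu.2.trans_le (min_le_left _ _)⟩) hs i
  have hslope : ∀ s ∈ Ioo T T',
      ∑ j, A k i j * x s j + ∑ j, sint (ν k i j) (fun θ => x (s + θ) j) ≤ -α * x T i := by
    intro s hs
    have hrow := add_le_add
      (sum_mul_le_metz_mulVec (A k) i (b := β • ξ) (y := x s) (hnear s hs)
        (by rw [Pi.smul_apply, smul_eq_mul, ← hi]; linarith [(abs_lt.1 (hdist s hs i)).1]))
      (sum_sint_le_Vmat_mulVec (ν k) i (b := β • ξ) (E := exp (α * h))
        (ψ := fun j θ => x (s + θ) j) fun j θ =>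
          hwindow (s + θ) ⟨by linarith [θ.2.1, hs.1], by linarith [θ.2.2, hs.2]⟩ j)
    simp only [mulVec_smul, Pi.smul_apply, smul_eq_mul] at hrow
    rw [hi]
    linarith
  filter_upwards [Ioo_mem_nhdsGT (lt_min hT₁ (by linarith) : T < T')] with z hz
  have hxi : ContinuousOn (fun u => x u i) (Icc T z) :=
    (continuous_apply i).comp_continuousOn (hx.1.mono fun u hu => mem_Ici.2 (by linarith [hu.1]))
  calc x z i ≤ x T i * exp (-α * (z - T)) :=
        le_mul_exp_of_hasDerivWithinAt_Ici hz.1 (hi ▸ (mul_pos hβ (hξ i)).le) hxi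
          (fun s hs => hderiv s ⟨hs.1, hs.2.trans hz.2⟩)
          (fun s hs => hslope s ⟨hs.1, hs.2.trans hz.2⟩)
    _ = K * exp (-α * z) * ξ i := by
      rw [hi, mul_right_comm, mul_assoc K, ← exp_add]
      ring_nf

lemma IsSolution.eventually_le (hx : IsSolution h σ A ν φ x) (hσ : IsSwitchingSignal σ)
    (hh : 0 < h) (hα : 0 ≤ α) (hrate : IsDecayRate h A ν ξ α) (hξ : ∀ j, 0 < ξ j) (hK : 0 < K)
    (hT : 0 ≤ T) (hpast : ∀ r ∈ Icc (-h) T, ∀ j, |x r j| ≤ K * exp (-α * r) * ξ j) (i : Fin n) :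
    ∀ᶠ z in 𝓝[>] T, x z i ≤ K * exp (-α * z) * ξ i := by
  rcases (le_of_abs_le (hpast T ⟨by linarith, le_rfl⟩ i)).lt_or_eq with hlt | heq
  · have hxT : ContinuousAt (fun u => x u i) T :=
      (continuous_apply i).continuousAt.comp (hx.1.continuousAt (Ici_mem_nhds (by linarith)))
    exact (hxT.eventually_lt (by fun_prop) hlt).filter_mono nhdsWithin_le_nhds |>.mono
      fun _ => le_of_lt
  · exact hx.eventually_le_of_eq hσ hh hα hrate hξ hK hT hpast heq

lemma IsSolution.eventually_abs_le (hx : IsSolution h σ A ν φ x) (hσ : IsSwitchingSignal σ)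
    (hh : 0 < h) (hα : 0 ≤ α) (hrate : IsDecayRate h A ν ξ α) (hξ : ∀ j, 0 < ξ j) (hK : 0 < K)
    (hT : 0 ≤ T) (hpast : ∀ r ∈ Icc (-h) T, ∀ j, |x r j| ≤ K * exp (-α * r) * ξ j) :
    ∀ᶠ z in 𝓝[>] T, ∀ j, |x z j| ≤ K * exp (-α * z) * ξ j := by
  have hpast' : ∀ r ∈ Icc (-h) T, ∀ j, |(-x) r j| ≤ K * exp (-α * r) * ξ j := by
    simpa only [Pi.neg_apply, abs_neg] using hpast
  refine eventually_all.2 fun j => ?_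
  filter_upwards [hx.eventually_le hσ hh hα hrate hξ hK hT hpast j,
    hx.neg.eventually_le hσ hh hα hrate hξ hK hT hpast' j] with z hz hz'
  exact abs_le'.2 ⟨hz, hz'⟩

lemma IsSolution.abs_le (hx : IsSolution h σ A ν φ x) (hσ : IsSwitchingSignal σ)
    (hh : 0 < h) (hα : 0 ≤ α) (hrate : IsDecayRate h A ν ξ α) (hξ : ∀ j, 0 < ξ j) (hK : 0 < K)
    (hφ : ∀ j, ‖φ‖ ≤ K * ξ j) {t : ℝ} (ht : -h ≤ t) (j : Fin n) :
    |x t j| ≤ K * exp (-α * t) * ξ j := by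
  set S := {r | ∀ j, |x r j| ≤ K * exp (-α * r) * ξ j}
  have hinit : Icc (-h) 0 ⊆ S := fun r hr j => by
    have hxr : |x r j| ≤ ‖φ‖ := by
      rw [hx.2.1 ⟨r, hr⟩, ← Real.norm_eq_abs]
      exact (norm_le_pi_norm _ j).trans (φ.norm_coe_le_norm _)
    have hexp : 1 ≤ exp (-α * r) := one_le_exp (by nlinarith [hr.2])
    linarith [hφ j, mul_le_mul_of_nonneg_right hexp (mul_pos hK (hξ j)).le]
  have hclosed : IsClosed (S ∩ Icc (-h) t) := by
    have hcont : ContinuousOn x (Icc (-h) t) := hx.1.mono Icc_subset_Ici_self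
    have := isClosed_Icc.isClosed_le (f := fun r j => |x r j|)
      (g := fun r j => K * exp (-α * r) * ξ j)
      (continuousOn_pi.2 fun j => ((continuous_apply j).comp_continuousOn hcont).abs)
      (by fun_prop)
    convert this using 1
    ext r
    simp only [S, mem_inter_iff, mem_ofPred_eq, Pi.le_def, and_comm]
  refine hclosed.Icc_subset_of_forall_mem_nhdsGT_of_Icc_subset
    (hinit ⟨le_rfl, neg_nonpos.2 hh.le⟩) (fun T hT hpast => ?_) ⟨ht, le_rfl⟩ j
  rcases lt_or_ge T 0 with hT0 | hT0
  · exact mem_of_superset (Ioo_mem_nhdsGT hT0) fun r hr => hinit ⟨by linarith [hT.1, hr.1], hr.2.le⟩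
  · exact hx.eventually_abs_le hσ hh hα hrate hξ hK hT0 hpast

lemma IsSolution.norm_le (hx : IsSolution h σ A ν φ x) (hσ : IsSwitchingSignal σ)
    (hh : 0 < h) (hα : 0 ≤ α) (hrate : IsDecayRate h A ν ξ α) (hξ : ∀ j, 0 < ξ j) {m M : ℝ}
    (hm : 0 < m) (hM : 0 ≤ M) (hmM : ∀ j, m ≤ ξ j ∧ ξ j ≤ M) {t : ℝ} (ht : 0 ≤ t) :
    ‖x t‖ ≤ M / m * exp (-α * t) * ‖φ‖ := by
  have hbound : ∀ K, ‖φ‖ / m < K → ‖x t‖ ≤ K * (M * exp (-α * t)) := by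
    intro K hK
    have hK0 : 0 < K := (div_nonneg (norm_nonneg _) hm.le).trans_lt hK
    have hφ (j : Fin n) : ‖φ‖ ≤ K * ξ j := by
      nlinarith [(div_lt_iff₀ hm).1 hK, (hmM j).1]
    refine (pi_norm_le_iff_of_nonneg (by positivity)).2 fun j => ?_
    calc ‖x t j‖ = |x t j| := Real.norm_eq_abs _
      _ ≤ K * exp (-α * t) * ξ j := hx.abs_le hσ hh hα hrate hξ hK0 hφ (by linarith) j
      _ ≤ K * (M * exp (-α * t)) := by
        linarith [mul_le_mul_of_nonneg_left (hmM j).2 (mul_pos hK0 (exp_pos (-α * t))).le]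
  have hlim : Tendsto (fun K => K * (M * exp (-α * t))) (𝓝[>] (‖φ‖ / m))
      (𝓝 (‖φ‖ / m * (M * exp (-α * t)))) :=
    (tendsto_id.mul_const _).mono_left nhdsWithin_le_nhds
  calc ‖x t‖ ≤ ‖φ‖ / m * (M * exp (-α * t)) :=
        ge_of_tendsto hlim (eventually_nhdsWithin_of_forall hbound)
    _ = M / m * exp (-α * t) * ‖φ‖ := by ring

end Solution

theorem expStable_of_common_LCLF {N n : ℕ} (h : ℝ) (hh : 0 < h)
    (A : Fin N → Matrix (Fin n) (Fin n) ℝ)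
    (ν : Fin N → Fin n → Fin n → MeasureTheory.SignedMeasure (Set.Icc (-h) (0:ℝ)))
    (ξ : Fin n → ℝ) (hξ : ∀ i, 0 < ξ i)
    (hLCLF : ∀ k, ∀ i, ((metz (A k) + Vmat (ν k)).mulVec ξ) i < 0) :
    ExpStableSw h A ν := by
  obtain ⟨α, hα, hrate⟩ := exists_isDecayRate hLCLF
  obtain ⟨m, hm, M, hM, hmM⟩ := exists_pos_forall_le_and_le hξ
  exact ⟨M / m, div_pos hM hm, α, hα, fun σ hσ φ x hx t ht =>
    hx.norm_le hσ hh hα.le hrate hξ hm hM.le hmM ht⟩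

end
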